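/- Let δρ and δφ be C¹ functions satisfying the linearized system δρ_t + δφ_x = 0 and δφ_t + σ² δρ_x = λ₁(x) δρ − λ₂(x) δφ, where λ₁(x) = λ φ_L²/(2D ρ⋆(x)²) and λ₂(x) = λ φ_L/(D ρ⋆(x)). Then the Riemann-type variables v(t, (ℓ−x)/ℓ) = sqrt(ρ⋆(x)/ρ⋆(ℓ)) e^{(σ/φ_L)(ρ⋆(x)−ρ⋆(ℓ))} ((1/2)δρ − (1/(2σ))δφ) and w(t, (ℓ−x)/ℓ) = sqrt(ρ⋆(x)/ρ⋆(ℓ)) e^{−(σ/φ_L)(ρ⋆(x)−ρ⋆(ℓ))} ((1/2)δρ + (1/(2σ))δφ) satisfy the canonical hyperbolic system v_t + (σ/ℓ) v_x̄ = −μ₁(x̄) w and w_t − (σ/ℓ) w_x̄ = μ₂(x̄) v on x̄ ∈ (0,1), where μ₁(x̄) = [λφ_L²/(4σD ρ⋆(ℓ(1−x̄))²) − λφ_L/(2D ρ⋆(ℓ(1−x̄)))] e^{(2σ/φ_L)(ρ⋆(ℓ(1−x̄))−ρ⋆(ℓ))} and μ₂(x̄) = [λφ_L²/(4σD ρ⋆(ℓ(1−x̄))²)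 + λφ_L/(2D ρ⋆(ℓ(1−x̄)))] e^{−(2σ/φ_L)(ρ⋆(ℓ(1−x̄))−ρ⋆(ℓ))}. -/

import Mathlib

/-!
Along the characteristics `dx/dt = ∓σ` the Riemann invariants `δρ/2 ∓ δφ/(2σ)` of the linearized
system are transported with a source that is linear in both invariants. Since
`ρ⋆' = -λφ_L²/(2σ²Dρ⋆)`, the weights `√(ρ⋆/ρ⋆(ℓ)) e^{±(σ/φ_L)(ρ⋆ - ρ⋆(ℓ))}` have logarithmic
derivatives `-(λ₁ ± σλ₂)/(2σ²)`, which is exactly what removes the diagonal part of the source and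
leaves only the cross couplings `μ₁`, `μ₂`. The equation for `w` is the one for `v` with `σ`
replaced by `-σ`, and the reflection `x̄ = (ℓ - x)/ℓ` only rescales `∂ₓ` by `-ℓ`.
-/

open Real Set

theorem hasDerivAt_of_forall_eq_sqrt_sub_mul {ρ : ℝ → ℝ} {A c x : ℝ}
    (hρ : ∀ x, ρ x = √(A - c * x)) (hx : 0 < A - c * x) :
    HasDerivAt ρ (-c / (2 * ρ x)) x := by
  obtain rfl : ρ = fun x => √(A - c * x) := funext hρ
  exact (((hasDerivAt_id' x).const_mul c).const_sub A).sqrt hx.ne' |>.congr_deriv (by ring)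

noncomputable def riemannWeight (ρ : ℝ → ℝ) (r κ x : ℝ) : ℝ := √(ρ x / ρ r) * exp (κ * (ρ x - ρ r))

theorem hasDerivAt_riemannWeight {ρ : ℝ → ℝ} {r κ x ρ' : ℝ} (hρ : HasDerivAt ρ ρ' x) (hx : 0 < ρ x)
    (hr : 0 < ρ r) :
    HasDerivAt (riemannWeight ρ r κ) (riemannWeight ρ r κ x * ((1 / (2 * ρ x) + κ) * ρ')) x := by
  have hq : 0 < ρ x / ρ r := div_pos hx hr
  have hsqrt := (hρ.div_const (ρ r)).sqrt hq.ne'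
  have hexp := ((hρ.sub_const (ρ r)).const_mul κ).exp
  refine (hsqrt.mul hexp).congr_deriv ?_
  have hs : √(ρ x / ρ r) ^ 2 = ρ x / ρ r := sq_sqrt hq.le
  have hs0 : √(ρ x / ρ r) ≠ 0 := (sqrt_pos.mpr hq).ne'
  unfold riemannWeight
  field_simp
  rw [hs]
  field_simp

theorem riemannWeight_eq_exp_mul_riemannWeight_neg (ρ : ℝ → ℝ) (r κ x : ℝ) :
    riemannWeight ρ r κ x = exp (2 * κ * (ρ x - ρ r)) * riemannWeight ρ r (-κ) x := by
  unfold riemannWeight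
  rw [mul_left_comm, ← exp_add]
  ring_nf

theorem hasDerivAt_of_forall_reflect {ℓ y g' : ℝ} {f g : ℝ → ℝ} (hℓ : ℓ ≠ 0)
    (hfg : ∀ x, f ((ℓ - x) / ℓ) = g x) (hg : HasDerivAt g g' (ℓ * (1 - y))) :
    HasDerivAt f (-ℓ * g') y := by
  have hf : f = g ∘ fun z => ℓ * (1 - z) := funext fun z => by
    rw [Function.comp_apply, ← hfg]; congr 1; field_simp; ring
  rw [hf]
  exact (hg.comp y (((hasDerivAt_id y).const_sub 1).const_mul ℓ)).congr_deriv (by ring)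

theorem riemann_invariant_transport {s l₁ l₂ a b aₜ aₓ bₜ bₓ G G' : ℝ} (hs : s ≠ 0)
    (hmass : aₜ + bₓ = 0) (hmom : bₜ + s ^ 2 * aₓ = l₁ * a - l₂ * b)
    (hG : G' = -(l₁ + s * l₂) / (2 * s ^ 2) * G) :
    G * (aₜ / 2 - bₜ / (2 * s)) - s * (G' * (a / 2 - b / (2 * s)) + G * (aₓ / 2 - bₓ / (2 * s)))
      = -(l₁ / (2 * s) - l₂ / 2) * G * (a / 2 + b / (2 * s)) := by
  obtain rfl : aₜ = -bₓ := by linear_combination hmass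
  obtain rfl : bₜ = l₁ * a - l₂ * b - s ^ 2 * aₓ := by linear_combination hmom
  subst hG
  field_simp
  ring

theorem weighted_riemann_invariant_characteristic_eq {lam D σ ℓ φL Ustar s : ℝ}
    (hlam : 0 < lam) (hD : 0 < D) (hσ : 0 < σ) (hℓ : 0 < ℓ) (hφL : 0 < φL)
    (hU : lam * φL ^ 2 * ℓ / (σ ^ 2 * D) < Ustar ^ 2)
    (hs : s ^ 2 = σ ^ 2) {ρs : ℝ → ℝ}
    (hρs : ∀ x, ρs x = √(Ustar ^ 2 - lam * φL ^ 2 / (σ ^ 2 * D) * x))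
    {δρ δφ V W : ℝ → ℝ → ℝ}
    (hV : ∀ t x, V t ((ℓ - x) / ℓ) =
      riemannWeight ρs ℓ (s / φL) x * (δρ t x / 2 - δφ t x / (2 * s)))
    (hW : ∀ t x, W t ((ℓ - x) / ℓ) =
      riemannWeight ρs ℓ (-(s / φL)) x * (δρ t x / 2 + δφ t x / (2 * s)))
    {t y ρt ρx φt φx : ℝ} (hy : y ∈ Ioo 0 1)
    (hρt : HasDerivAt (fun τ => δρ τ (ℓ * (1 - y))) ρt t)
    (hρx : HasDerivAt (δρ t) ρx (ℓ * (1 - y)))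
    (hφt : HasDerivAt (fun τ => δφ τ (ℓ * (1 - y))) φt t)
    (hφx : HasDerivAt (δφ t) φx (ℓ * (1 - y)))
    (hmass : ρt + φx = 0)
    (hmom : φt + σ ^ 2 * ρx = lam * φL ^ 2 / (2 * D * ρs (ℓ * (1 - y)) ^ 2) * δρ t (ℓ * (1 - y))
      - lam * φL / (D * ρs (ℓ * (1 - y))) * δφ t (ℓ * (1 - y))) :
    ∃ Vt Vy, HasDerivAt (fun τ => V τ y) Vt t ∧ HasDerivAt (V t) Vy y ∧
      Vt + s / ℓ * Vy = -((lam * φL ^ 2 / (4 * s * D * ρs (ℓ * (1 - y)) ^ 2)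
        - lam * φL / (2 * D * ρs (ℓ * (1 - y))))
        * exp (2 * s / φL * (ρs (ℓ * (1 - y)) - ρs ℓ))) * W t y := by
  set x := ℓ * (1 - y) with hx
  obtain ⟨c, hc_def⟩ : ∃ c, c = lam * φL ^ 2 / (σ ^ 2 * D) := ⟨_, rfl⟩
  have hc : 0 < c := hc_def ▸ by positivity
  have hcℓ : c * ℓ < Ustar ^ 2 := by rw [hc_def, div_mul_eq_mul_div]; exact hU
  simp only [← hc_def] at hρs
  have hrad : ∀ z ≤ ℓ, 0 < Ustar ^ 2 - c * z := fun z hz => by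
    nlinarith [mul_le_mul_of_nonneg_left hz hc.le]
  have hxℓ : x ≤ ℓ := by nlinarith [hy.1]
  have hρx_pos : 0 < ρs x := hρs x ▸ sqrt_pos.mpr (hrad x hxℓ)
  have hρℓ_pos : 0 < ρs ℓ := hρs ℓ ▸ sqrt_pos.mpr (hrad ℓ le_rfl)
  have hρs' : HasDerivAt ρs (-c / (2 * ρs x)) x :=
    hasDerivAt_of_forall_eq_sqrt_sub_mul hρs (hrad x hxℓ)
  have hs0 : s ≠ 0 := by rintro rfl; nlinarith
  have hyx : (ℓ - x) / ℓ = y := by rw [hx]; field_simp; ring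
  set G := riemannWeight ρs ℓ (s / φL)
  set G' := G x * ((1 / (2 * ρs x) + s / φL) * (-c / (2 * ρs x)))
  have hG : HasDerivAt G G' x := hasDerivAt_riemannWeight hρs' hρx_pos hρℓ_pos
  have hG' : G' = -(lam * φL ^ 2 / (2 * D * ρs x ^ 2) + s * (lam * φL / (D * ρs x)))
      / (2 * s ^ 2) * G x := by
    simp only [G', hc_def, ← hs]
    field_simp
  refine ⟨G x * (ρt / 2 - φt / (2 * s)),
    -ℓ * (G' * (δρ t x / 2 - δφ t x / (2 * s)) + G x * (ρx / 2 - φx / (2 * s))), ?_, ?_, ?_⟩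
  · rw [show (fun τ => V τ y) = _ from funext fun τ => hyx ▸ hV τ x]
    exact ((hρt.div_const 2).sub (hφt.div_const (2 * s))).const_mul (G x)
  · exact hasDerivAt_of_forall_reflect hℓ.ne' (hV t)
      (hG.mul ((hρx.div_const 2).sub (hφx.div_const (2 * s))))
  · rw [← hyx, hW t x]
    calc _ = G x * (ρt / 2 - φt / (2 * s))
          - s * (G' * (δρ t x / 2 - δφ t x / (2 * s)) + G x * (ρx / 2 - φx / (2 * s))) := by
          field_simp
          ring
      _ = _ := riemann_invariant_transport hs0 hmass (hs ▸ hmom) hG'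
      _ = _ := by
          rw [show G x = _ from riemannWeight_eq_exp_mul_riemannWeight_neg ρs ℓ (s / φL) x,
            show 2 * s / φL = 2 * (s / φL) by ring]
          field_simp
          ring

theorem canonical_form_transformation_general
    (lam D σ ℓ φL Ustar : ℝ)
    (hlam : 0 < lam) (hD : 0 < D) (hσ : 0 < σ) (hℓ : 0 < ℓ) (hφL : 0 < φL)
    (hU : lam * φL ^ 2 * ℓ / (σ ^ 2 * D) < Ustar ^ 2)
    (ρs : ℝ → ℝ)
    (hρs : ∀ x, ρs x = Real.sqrt (Ustar ^ 2 - lam * φL ^ 2 / (σ ^ 2 * D) * x))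
    (lam1 lam2 : ℝ → ℝ)
    (hlam1 : ∀ x, lam1 x = lam * φL ^ 2 / (2 * D * (ρs x) ^ 2))
    (hlam2 : ∀ x, lam2 x = lam * φL / (D * ρs x))
    (μ1 μ2 : ℝ → ℝ)
    (hμ1 : ∀ y, μ1 y =
      (lam * φL ^ 2 / (4 * σ * D * (ρs (ℓ * (1 - y))) ^ 2)
        - lam * φL / (2 * D * ρs (ℓ * (1 - y))))
        * Real.exp ((2 * σ / φL) * (ρs (ℓ * (1 - y)) - ρs ℓ)))
    (hμ2 : ∀ y, μ2 y =
      (lam * φL ^ 2 / (4 * σ * D * (ρs (ℓ * (1 - y))) ^ 2)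
        + lam * φL / (2 * D * ρs (ℓ * (1 - y))))
        * Real.exp (-(2 * σ / φL) * (ρs (ℓ * (1 - y)) - ρs ℓ)))
    (δρ δφ : ℝ → ℝ → ℝ)
    -- the linearized system: δρ_t + δφ_x = 0, δφ_t + σ² δρ_x = λ₁ δρ − λ₂ δφ
    (hPDE : ∀ t > (0 : ℝ), ∀ x ∈ Set.Ioo 0 ℓ,
      ∃ ρt ρx φt φx : ℝ,
        HasDerivAt (fun τ => δρ τ x) ρt t ∧ HasDerivAt (fun y => δρ t y) ρx x ∧
        HasDerivAt (fun τ => δφ τ x) φt t ∧ HasDerivAt (fun y => δφ t y) φx x ∧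
        ρt + φx = 0 ∧
        φt + σ ^ 2 * ρx = lam1 x * δρ t x - lam2 x * δφ t x)
    (v w : ℝ → ℝ → ℝ)
    (hv : ∀ t x, v t ((ℓ - x) / ℓ) =
      Real.sqrt (ρs x / ρs ℓ) * Real.exp ((σ / φL) * (ρs x - ρs ℓ))
        * ((1 / 2) * δρ t x - (1 / (2 * σ)) * δφ t x))
    (hw : ∀ t x, w t ((ℓ - x) / ℓ) =
      Real.sqrt (ρs x / ρs ℓ) * Real.exp (-(σ / φL) * (ρs x - ρs ℓ))
        * ((1 / 2) * δρ t x + (1 / (2 * σ)) * δφ t x)) :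
    ∀ t > (0 : ℝ), ∀ y ∈ Set.Ioo (0 : ℝ) 1,
      ∃ vt vx wt wx : ℝ,
        HasDerivAt (fun τ => v τ y) vt t ∧ HasDerivAt (fun z => v t z) vx y ∧
        HasDerivAt (fun τ => w τ y) wt t ∧ HasDerivAt (fun z => w t z) wx y ∧
        vt + (σ / ℓ) * vx = -μ1 y * w t y ∧
        wt - (σ / ℓ) * wx = μ2 y * v t y := by
  intro t ht y hy
  obtain ⟨ρt, ρx, φt, φx, hρt, hρx, hφt, hφx, hmass, hmom⟩ :=
    hPDE t ht (ℓ * (1 - y)) ⟨by nlinarith [hy.2], by nlinarith [hy.1]⟩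
  rw [hlam1, hlam2] at hmom
  have hv_σ : ∀ t x, v t ((ℓ - x) / ℓ) =
      riemannWeight ρs ℓ (σ / φL) x * (δρ t x / 2 - δφ t x / (2 * σ)) := fun t x => by
    rw [hv, riemannWeight]; ring
  have hw_σ : ∀ t x, w t ((ℓ - x) / ℓ) =
      riemannWeight ρs ℓ (-(σ / φL)) x * (δρ t x / 2 + δφ t x / (2 * σ)) := fun t x => by
    rw [hw, riemannWeight]; ring
  have hw_negσ : ∀ t x, w t ((ℓ - x) / ℓ) =
      riemannWeight ρs ℓ (-σ / φL) x * (δρ t x / 2 - δφ t x / (2 * -σ)) := fun t x => by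
    rw [hw, riemannWeight, neg_div]; ring
  have hv_negσ : ∀ t x, v t ((ℓ - x) / ℓ) =
      riemannWeight ρs ℓ (-(-σ / φL)) x * (δρ t x / 2 + δφ t x / (2 * -σ)) := fun t x => by
    rw [hv, riemannWeight, neg_div, neg_neg]; ring
  obtain ⟨vt, vx, hvt, hvx, hv_eq⟩ := weighted_riemann_invariant_characteristic_eq
    hlam hD hσ hℓ hφL hU rfl hρs hv_σ hw_σ hy hρt hρx hφt hφx hmass hmom
  obtain ⟨wt, wx, hwt, hwx, hw_eq⟩ := weighted_riemann_invariant_characteristic_eq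
    hlam hD hσ hℓ hφL hU (neg_sq σ) hρs hw_negσ hv_negσ hy hρt hρx hφt hφx hmass hmom
  refine ⟨vt, vx, wt, wx, hvt, hvx, hwt, hwx, by rw [hv_eq, hμ1], ?_⟩
  rw [hμ2, show -(2 * σ / φL) = 2 * -σ / φL by ring]
  linear_combination hw_eq

/-- Riemann-type change of variables transforms the linearized gas flow system
into the canonical `2×2` hyperbolic system
`v_t + (σ/ℓ) v_x̄ = −μ₁(x̄) w`, `w_t − (σ/ℓ) w_x̄ = μ₂(x̄) v`. -/
theorem canonical_form_transformation
    (lam D σ ℓ φL Ustar : ℝ)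
    (hlam : 0 < lam) (hD : 0 < D) (hσ : 0 < σ) (hℓ : 0 < ℓ) (hφL : 0 < φL)
    (hUpos : 0 < Ustar) (hU : lam * φL ^ 2 * ℓ / (σ ^ 2 * D) < Ustar ^ 2)
    (ρs : ℝ → ℝ)
    (hρs : ∀ x, ρs x = Real.sqrt (Ustar ^ 2 - lam * φL ^ 2 / (σ ^ 2 * D) * x))
    (lam1 lam2 : ℝ → ℝ)
    (hlam1 : ∀ x, lam1 x = lam * φL ^ 2 / (2 * D * (ρs x) ^ 2))
    (hlam2 : ∀ x, lam2 x = lam * φL / (D * ρs x))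
    (μ1 μ2 : ℝ → ℝ)
    (hμ1 : ∀ y, μ1 y =
      (lam * φL ^ 2 / (4 * σ * D * (ρs (ℓ * (1 - y))) ^ 2)
        - lam * φL / (2 * D * ρs (ℓ * (1 - y))))
        * Real.exp ((2 * σ / φL) * (ρs (ℓ * (1 - y)) - ρs ℓ)))
    (hμ2 : ∀ y, μ2 y =
      (lam * φL ^ 2 / (4 * σ * D * (ρs (ℓ * (1 - y))) ^ 2)
        + lam * φL / (2 * D * ρs (ℓ * (1 - y))))
        * Real.exp (-(2 * σ / φL) * (ρs (ℓ * (1 - y)) - ρs ℓ)))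
    (δρ δφ : ℝ → ℝ → ℝ)
    (hC1ρ : ContDiff ℝ 1 (fun p : ℝ × ℝ => δρ p.1 p.2))
    (hC1φ : ContDiff ℝ 1 (fun p : ℝ × ℝ => δφ p.1 p.2))
    -- the linearized system: δρ_t + δφ_x = 0, δφ_t + σ² δρ_x = λ₁ δρ − λ₂ δφ
    (hPDE : ∀ t > (0 : ℝ), ∀ x ∈ Set.Ioo 0 ℓ,
      ∃ ρt ρx φt φx : ℝ,
        HasDerivAt (fun τ => δρ τ x) ρt t ∧ HasDerivAt (fun y => δρ t y) ρx x ∧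
        HasDerivAt (fun τ => δφ τ x) φt t ∧ HasDerivAt (fun y => δφ t y) φx x ∧
        ρt + φx = 0 ∧
        φt + σ ^ 2 * ρx = lam1 x * δρ t x - lam2 x * δφ t x)
    (v w : ℝ → ℝ → ℝ)
    (hv : ∀ t x, v t ((ℓ - x) / ℓ) =
      Real.sqrt (ρs x / ρs ℓ) * Real.exp ((σ / φL) * (ρs x - ρs ℓ))
        * ((1 / 2) * δρ t x - (1 / (2 * σ)) * δφ t x))
    (hw : ∀ t x, w t ((ℓ - x) / ℓ) =
      Real.sqrt (ρs x / ρs ℓ) * Real.exp (-(σ / φL) * (ρs x - ρs ℓ))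
        * ((1 / 2) * δρ t x + (1 / (2 * σ)) * δφ t x)) :
    ∀ t > (0 : ℝ), ∀ y ∈ Set.Ioo (0 : ℝ) 1,
      ∃ vt vx wt wx : ℝ,
        HasDerivAt (fun τ => v τ y) vt t ∧ HasDerivAt (fun z => v t z) vx y ∧
        HasDerivAt (fun τ => w τ y) wt t ∧ HasDerivAt (fun z => w t z) wx y ∧
        vt + (σ / ℓ) * vx = -μ1 y * w t y ∧
        wt - (σ / ℓ) * wx = μ2 y * v t y :=
  canonical_form_transformation_general lam D σ ℓ φL Ustar hlam hD hσ hℓ hφL hU ρs hρs lam1 lam2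
    hlam1 hlam2 μ1 μ2 hμ1 hμ2 δρ δφ hPDE v w hv hw
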